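/- arXiv:1301.0374 — 4 statements merged into one kernel-verified Lean document; each statement's English description precedes it below -/
import Mathlib

section
/- The rank of the adjacency matrix of a tree T equals twice the matching number of T. -/
/-!
A forest with an edge has a pendant vertex `u`, adjacent only to `v`; delete every edge at `u`
and `v`. The matching number drops by exactly one: the edges at `u` and `v` all contain `v`, so a
matching uses at most one of them, and `uv` extends any matching of the smaller graph. The rank
drops by exactly two: row `u` of the adjacency matrix is the indicator of `v`, so subtracting
multiples of rows `u` and `v` from each row leaves the adjacency matrix of the smaller graph,
whose rows vanish in columns `u` and `v`, where rows `u` and `v` are independent. Well-founded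
induction on the graph finishes the proof, over any field.
-/

/-- The matching number of a graph: the largest size of a set of pairwise
disjoint edges. -/
noncomputable def matchingNumber {V : Type*} [Fintype V] (G : SimpleGraph V) : ℕ :=
  sSup {k : ℕ | ∃ M : Finset (Sym2 V), ↑M ⊆ G.edgeSet ∧
    (M : Set (Sym2 V)).Pairwise (fun e f => ∀ v : V, ¬(v ∈ e ∧ v ∈ f)) ∧ M.card = k}

open Finset Module Submodule

theorem finrank_span_pair_sup_eq_add_two {K ι : Type*} [Field K] [Finite ι]
    {W : Submodule K (ι → K)} {u v : ι} {p q : ι → K}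
    (hWu : W ≤ LinearMap.ker (LinearMap.proj u)) (hWv : W ≤ LinearMap.ker (LinearMap.proj v))
    (hpu : p u = 0) (hpv : p v ≠ 0) (hqu : q u ≠ 0) :
    finrank K ↥(span K {p, q} ⊔ W) = finrank K W + 2 := by
  have hcoeff : ∀ a b : K, a • p + b • q ∈ W → a = 0 ∧ b = 0 := by
    intro a b hw
    have hu : a * p u + b * q u = 0 := hWu hw
    have hv : a * p v + b * q v = 0 := hWv hw
    have hb : b = 0 := by simpa [hpu, hqu] using hu
    exact ⟨by simpa [hb, hpv] using hv, hb⟩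
  have hli : LinearIndependent K ![p, q] :=
    LinearIndependent.pair_iff.mpr fun a b h => hcoeff a b (h ▸ W.zero_mem)
  have hpair : finrank K (span K {p, q}) = 2 := by
    rw [← Matrix.range_cons_cons_empty p q]
    simpa using finrank_span_eq_card hli
  have hdisj : span K {p, q} ⊓ W = ⊥ := by
    refine eq_bot_iff.mpr fun w ⟨hpq, hw⟩ => ?_
    obtain ⟨a, b, rfl⟩ := mem_span_pair.mp hpq
    obtain ⟨rfl, rfl⟩ := hcoeff a b hw
    simp
  have := finrank_sup_add_finrank_inf_eq (span K {p, q}) W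
  rw [hdisj, finrank_bot, hpair] at this
  omega

namespace SimpleGraph

variable {V : Type*} {G : SimpleGraph V} {u v : V}

theorem IsAcyclic.exists_pendant_edge [Finite V] (hG : G.IsAcyclic) {a b : V} (hab : G.Adj a b) :
    ∃ u v, G.Adj u v ∧ ∀ w, G.Adj u w → w = v := by
  have : Nonempty V := ⟨a⟩
  obtain ⟨u, v, p, hp, hmax⟩ := Walk.exists_isPath_forall_isPath_length_le_length G
  have hnil : ¬p.Nil := by
    have := hmax a b hab.toWalk (by simp [hab.ne])
    rw [← Walk.length_eq_zero_iff]
    simp at this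
    omega
  refine ⟨u, p.snd, p.adj_snd hnil, fun w hw => hG.eq_snd_of_adj_start hp hw ?_⟩
  by_contra hw'
  have := hmax _ _ (p.cons hw.symm) (hp.cons hw')
  simp at this

theorem mem_edgeSet_deleteIncidenceSet {e : Sym2 V} :
    e ∈ (G.deleteIncidenceSet u).edgeSet ↔ e ∈ G.edgeSet ∧ u ∉ e := by
  simp [edgeSet_deleteIncidenceSet, incidenceSet]

section Rank

variable (K : Type*) [DecidableEq V] [DecidableRel G.Adj]

theorem row_adjMatrix_deleteIncidenceSet_of_pendant [Ring K] (huv : G.Adj u v)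
    (hu : ∀ w, G.Adj u w → w = v) (x : V) :
    ((G.deleteIncidenceSet u).deleteIncidenceSet v).adjMatrix K x =
      G.adjMatrix K x - G.adjMatrix K x v • G.adjMatrix K u -
        G.adjMatrix K x u • G.adjMatrix K v := by
  ext w
  simp only [adjMatrix_apply, deleteIncidenceSet_adj, Pi.sub_apply, Pi.smul_apply, smul_eq_mul]
  split_ifs <;> grind [G.adj_comm, G.irrefl]

theorem span_range_adjMatrix_of_pendant [Ring K] (huv : G.Adj u v)
    (hu : ∀ w, G.Adj u w → w = v) :
    span K (Set.range (G.adjMatrix K)) =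
      span K {G.adjMatrix K u, G.adjMatrix K v} ⊔
        span K (Set.range (((G.deleteIncidenceSet u).deleteIncidenceSet v).adjMatrix K)) := by
  have hrow := row_adjMatrix_deleteIncidenceSet_of_pendant K huv hu
  apply le_antisymm
  · refine span_le.mpr ?_
    rintro _ ⟨x, rfl⟩
    have hx : G.adjMatrix K x = ((G.deleteIncidenceSet u).deleteIncidenceSet v).adjMatrix K x +
        G.adjMatrix K x v • G.adjMatrix K u + G.adjMatrix K x u • G.adjMatrix K v := by
      rw [hrow]
      abel
    rw [hx]
    refine add_mem (add_mem (mem_sup_right (subset_span ⟨x, rfl⟩)) ?_) ?_ <;>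
      exact mem_sup_left (smul_mem _ _ (subset_span (by simp)))
  · refine sup_le (span_le.mpr ?_) (span_le.mpr ?_)
    · rintro _ (rfl | rfl) <;> exact subset_span ⟨_, rfl⟩
    · rintro _ ⟨x, rfl⟩
      rw [hrow]
      exact sub_mem (sub_mem (subset_span ⟨x, rfl⟩) (smul_mem _ _ (subset_span ⟨u, rfl⟩)))
        (smul_mem _ _ (subset_span ⟨v, rfl⟩))

theorem rank_adjMatrix_of_pendant [Field K] [Fintype V] (huv : G.Adj u v)
    (hu : ∀ w, G.Adj u w → w = v) :
    (G.adjMatrix K).rank =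
      (((G.deleteIncidenceSet u).deleteIncidenceSet v).adjMatrix K).rank + 2 := by
  rw [Matrix.rank_eq_finrank_span_row, Matrix.rank_eq_finrank_span_row, Matrix.row, Matrix.row,
    span_range_adjMatrix_of_pendant K huv hu]
  refine finrank_span_pair_sup_eq_add_two (u := u) (v := v) ?_ ?_
    (by simp) (by simp [huv]) (by simp [huv.symm]) <;>
    exact span_le.mpr fun _ ⟨x, hx⟩ => by simp [← hx, deleteIncidenceSet_adj]

end Rank

section Matching

def IsEdgeMatching (G : SimpleGraph V) (M : Finset (Sym2 V)) : Prop :=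
  ↑M ⊆ G.edgeSet ∧ (M : Set (Sym2 V)).Pairwise (fun e f => ∀ v : V, ¬(v ∈ e ∧ v ∈ f))

variable [Fintype V]

theorem bddAbove_card_isEdgeMatching (G : SimpleGraph V) :
    BddAbove {k : ℕ | ∃ M : Finset (Sym2 V), ↑M ⊆ G.edgeSet ∧
      (M : Set (Sym2 V)).Pairwise (fun e f => ∀ v : V, ¬(v ∈ e ∧ v ∈ f)) ∧ M.card = k} :=
  bddAbove_def.mpr ⟨Fintype.card (Sym2 V), by rintro _ ⟨M, -, -, rfl⟩; exact card_le_univ M⟩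

theorem IsEdgeMatching.card_le_matchingNumber {M : Finset (Sym2 V)} (hM : G.IsEdgeMatching M) :
    #M ≤ matchingNumber G :=
  le_csSup (bddAbove_card_isEdgeMatching G) ⟨M, hM.1, hM.2, rfl⟩

theorem exists_isEdgeMatching_card_eq_matchingNumber (G : SimpleGraph V) :
    ∃ M, G.IsEdgeMatching M ∧ #M = matchingNumber G := by
  obtain ⟨M, hE, hdisj, hcard⟩ :=
    Nat.sSup_mem ⟨0, by exact ⟨∅, by simp, by simp, rfl⟩⟩ (bddAbove_card_isEdgeMatching G)
  exact ⟨M, ⟨hE, hdisj⟩, hcard⟩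

theorem matchingNumber_deleteIncidenceSet_add_one_le (huv : G.Adj u v) :
    matchingNumber ((G.deleteIncidenceSet u).deleteIncidenceSet v) + 1 ≤ matchingNumber G := by
  classical
  obtain ⟨M, ⟨hE, hdisj⟩, hcard⟩ :=
    exists_isEdgeMatching_card_eq_matchingNumber ((G.deleteIncidenceSet u).deleteIncidenceSet v)
  have havoid : ∀ e ∈ M, e ∈ G.edgeSet ∧ u ∉ e ∧ v ∉ e := fun e he => by
    have := hE he
    simp only [mem_edgeSet_deleteIncidenceSet] at this
    tauto
  have hnew : s(u, v) ∉ M := fun h => (havoid _ h).2.1 (Sym2.mem_mk_left u v)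
  rw [← hcard, ← card_insert_of_notMem hnew]
  refine IsEdgeMatching.card_le_matchingNumber ⟨?_, ?_⟩
  · rw [coe_insert, Set.insert_subset_iff]
    exact ⟨huv, fun e he => (havoid e he).1⟩
  · rw [coe_insert, Set.pairwise_insert]
    have hmeet : ∀ e ∈ M, ∀ x, x ∈ s(u, v) → x ∉ e := fun e he x hx => by
      rcases Sym2.mem_iff.mp hx with rfl | rfl
      exacts [(havoid e he).2.1, (havoid e he).2.2]
    exact ⟨hdisj, fun e he _ => ⟨fun x hx => hmeet e he x hx.1 hx.2,
      fun x hx => hmeet e he x hx.2 hx.1⟩⟩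

theorem matchingNumber_le_matchingNumber_deleteIncidenceSet_add_one
    (hu : ∀ w, G.Adj u w → w = v) :
    matchingNumber G ≤ matchingNumber ((G.deleteIncidenceSet u).deleteIncidenceSet v) + 1 := by
  classical
  obtain ⟨M, ⟨hE, hdisj⟩, hcard⟩ := exists_isEdgeMatching_card_eq_matchingNumber G
  have hv : ∀ e ∈ M, u ∈ e ∨ v ∈ e → v ∈ e := by
    rintro e he (hue | hve)
    · obtain ⟨w, rfl⟩ := Sym2.mem_iff_exists.mp hue
      rw [hu w (hE he)]
      exact Sym2.mem_mk_right u v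
    · exact hve
  have hrest : #(M.filter fun e => ¬(u ∉ e ∧ v ∉ e)) ≤ 1 := by
    refine card_le_one.mpr fun e he f hf => by_contra fun hne => ?_
    simp only [mem_filter, not_and_or, not_not] at he hf
    exact hdisj he.1 hf.1 hne v ⟨hv e he.1 he.2, hv f hf.1 hf.2⟩
  have hkept : #(M.filter fun e => u ∉ e ∧ v ∉ e) ≤
      matchingNumber ((G.deleteIncidenceSet u).deleteIncidenceSet v) := by
    refine IsEdgeMatching.card_le_matchingNumber
      ⟨fun e he => ?_, hdisj.mono (coe_subset.mpr (filter_subset _ M))⟩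
    obtain ⟨heM, hue, hve⟩ := mem_filter.mp he
    simpa [mem_edgeSet_deleteIncidenceSet, hue, hve] using hE heM
  rw [← hcard, ← card_filter_add_card_filter_not (fun e => u ∉ e ∧ v ∉ e)]
  omega

theorem matchingNumber_of_pendant (huv : G.Adj u v) (hu : ∀ w, G.Adj u w → w = v) :
    matchingNumber G = matchingNumber ((G.deleteIncidenceSet u).deleteIncidenceSet v) + 1 :=
  (matchingNumber_le_matchingNumber_deleteIncidenceSet_add_one hu).antisymm
    (matchingNumber_deleteIncidenceSet_add_one_le huv)

theorem matchingNumber_bot : matchingNumber (⊥ : SimpleGraph V) = 0 := by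
  obtain ⟨M, ⟨hE, -⟩, hcard⟩ :=
    exists_isEdgeMatching_card_eq_matchingNumber (⊥ : SimpleGraph V)
  rw [← hcard, card_eq_zero, ← coe_eq_empty]
  simpa using hE

end Matching

theorem IsAcyclic.rank_adjMatrix_eq_two_mul_matchingNumber (K : Type*) [Field K] [Fintype V]
    [DecidableEq V] [DecidableRel G.Adj] (hG : G.IsAcyclic) :
    (G.adjMatrix K).rank = 2 * matchingNumber G := by
  induction G using WellFoundedLT.induction generalizing ‹DecidableRel G.Adj› with
  | _ G ih =>
  by_cases hE : ∃ a b, G.Adj a b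
  · obtain ⟨a, b, hab⟩ := hE
    obtain ⟨u, v, huv, hu⟩ := hG.exists_pendant_edge hab
    have hlt : (G.deleteIncidenceSet u).deleteIncidenceSet v < G :=
      lt_of_le_not_ge ((deleteIncidenceSet_le _ _).trans (deleteIncidenceSet_le _ _))
        fun h => by simpa [deleteIncidenceSet_adj] using h huv
    rw [rank_adjMatrix_of_pendant K huv hu, matchingNumber_of_pendant huv hu,
      ih _ hlt (hG.anti hlt.le)]
    ring
  · simp only [not_exists] at hE
    have hA : G.adjMatrix K = 0 := by
      ext a b
      simp [hE a b]
    have hbot : G = ⊥ := by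
      ext a b
      simpa using hE a b
    rw [hA, Matrix.rank_zero, hbot, matchingNumber_bot]

end SimpleGraph

theorem rank_tree_eq_two_mul_matchingNumber {V : Type*} [Fintype V]
    (G : SimpleGraph V) [DecidableRel G.Adj] (hT : G.IsTree) :
    (G.adjMatrix ℚ).rank = 2 * matchingNumber G := by
  classical
  exact hT.isAcyclic.rank_adjMatrix_eq_two_mul_matchingNumber ℚ
end

section
/- Let G be a finite simple graph and let u, v be distinct vertices of G with the same neighborhood (in particular u and v are non-adjacent). Then the rank of the adjacency matrix of G equals the rank of the adjacency matrix of the induced subgraph obtained by deleting v. -/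
namespace Matrix

variable {m n K : Type*} [Fintype m] [Fintype n] [Field K]

theorem rank_submatrix_ne_of_row_eq [DecidableEq m] (A : Matrix m n K) {u v : m} (huv : u ≠ v)
    (h : A v = A u) : (A.submatrix ((↑) : {w // w ≠ v} → m) id).rank = A.rank := by
  have hrows : Set.range (A.submatrix ((↑) : {w // w ≠ v} → m) id).row = Set.range A.row := by
    ext x
    constructor
    · rintro ⟨w, rfl⟩
      exact ⟨w, rfl⟩
    · rintro ⟨w, rfl⟩
      by_cases hw : w = v
      · subst hw
        exact ⟨⟨u, huv⟩, h.symm⟩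
      · exact ⟨⟨w, hw⟩, rfl⟩
  rw [rank_eq_finrank_span_row, rank_eq_finrank_span_row, hrows]

theorem rank_submatrix_ne_of_col_eq [DecidableEq n] (A : Matrix m n K) {u v : n} (huv : u ≠ v)
    (h : ∀ i, A i v = A i u) : (A.submatrix id ((↑) : {w // w ≠ v} → n)).rank = A.rank := by
  rw [← rank_transpose, transpose_submatrix, ← rank_transpose A]
  exact rank_submatrix_ne_of_row_eq Aᵀ huv (funext h)

/-- For a symmetric matrix, a duplicated row is also a duplicated column. -/
theorem IsSymm.rank_submatrix_ne_of_row_eq [DecidableEq n] {A : Matrix n n K} (hA : A.IsSymm)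
    {u v : n} (huv : u ≠ v) (h : A v = A u) :
    (A.submatrix ((↑) : {w // w ≠ v} → n) ((↑) : {w // w ≠ v} → n)).rank = A.rank := by
  have hcol : ∀ i, A.submatrix ((↑) : {w // w ≠ v} → n) id i v
      = A.submatrix ((↑) : {w // w ≠ v} → n) id i u := fun i => by
    simp only [submatrix_apply, id_eq, hA.apply v, hA.apply u, h]
  rw [← Matrix.rank_submatrix_ne_of_row_eq A huv h, ← rank_submatrix_ne_of_col_eq _ huv hcol,
    submatrix_submatrix]
  rfl

end Matrix

theorem SimpleGraph.adjMatrix_row_eq_of_neighborSet_eq {V R : Type*} [Zero R] [One R]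
    (G : SimpleGraph V) [DecidableRel G.Adj] {u v : V} (h : G.neighborSet u = G.neighborSet v) :
    G.adjMatrix R u = G.adjMatrix R v := by
  funext w
  simp only [adjMatrix_apply, ← mem_neighborSet, h]

theorem rank_delete_duplicate_vertex {V : Type*} [Fintype V] [DecidableEq V]
    (G : SimpleGraph V) [DecidableRel G.Adj] (u v : V) (huv : u ≠ v)
    (hN : G.neighborSet u = G.neighborSet v) :
    (G.adjMatrix ℚ).rank
      = ((G.adjMatrix ℚ).submatrix ((↑) : {w : V // w ≠ v} → V)
          ((↑) : {w : V // w ≠ v} → V)).rank :=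
  (G.isSymm_adjMatrix.rank_submatrix_ne_of_row_eq huv
    (G.adjMatrix_row_eq_of_neighborSet_eq hN.symm)).symm
end

section
/- Let G be a finite simple graph in which no two distinct vertices have the same neighborhood (G is reduced), and let H be an induced subgraph of G with r(H) = r(G). If u and v are two distinct vertices of G outside H that are not adjacent in G, then the neighborhoods of u and v restricted to the vertex set of H are distinct. -/
/-!
The rows of the adjacency matrix `A` indexed by `H` already have rank `r(G)`, so they cut out
the same kernel as `A`. If `u` and `v` had the same neighbours in `H`, the vector `e_u - e_v`
would be annihilated by those rows, hence by `A`; then the columns `u` and `v` of `A` would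
coincide, i.e. `u` and `v` would have the same neighbourhood in `G`, which a reduced graph forbids.
-/

open Matrix

namespace Matrix

variable {m m₀ n n₀ K : Type*} [Field K] [Fintype n]

theorem rank_submatrix_id_eq_of_rank_submatrix_eq [Fintype n₀] (A : Matrix m n K) (r : m₀ → m)
    (c : n₀ → n) (h : (A.submatrix r c).rank = A.rank) : (A.submatrix r id).rank = A.rank :=
  le_antisymm (rank_submatrix_le A r id) (h ▸ rank_submatrix_le (A.submatrix r id) id c)

theorem ker_mulVecLin_le_ker_submatrix_id (A : Matrix m n K) (r : m₀ → m) :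
    LinearMap.ker A.mulVecLin ≤ LinearMap.ker (A.submatrix r id).mulVecLin := by
  intro x hx
  have hx : A *ᵥ x = 0 := hx
  show A.submatrix r id *ᵥ x = 0
  ext i
  simpa [mulVec, dotProduct] using congrFun hx (r i)

theorem ker_submatrix_id_eq_of_rank_eq (A : Matrix m n K) (r : m₀ → m)
    (h : (A.submatrix r id).rank = A.rank) :
    LinearMap.ker (A.submatrix r id).mulVecLin = LinearMap.ker A.mulVecLin := by
  refine (Submodule.eq_of_le_of_finrank_eq (ker_mulVecLin_le_ker_submatrix_id A r) ?_).symm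
  have hA := LinearMap.finrank_range_add_finrank_ker A.mulVecLin
  have hB := LinearMap.finrank_range_add_finrank_ker (A.submatrix r id).mulVecLin
  simp only [rank] at h
  omega

theorem col_eq_of_rank_submatrix_id_eq [DecidableEq n] (A : Matrix m n K) (r : m₀ → m)
    (h : (A.submatrix r id).rank = A.rank) {u v : n} (huv : ∀ i, A (r i) u = A (r i) v) :
    A.col u = A.col v := by
  have hsub : Pi.single u 1 - Pi.single v 1 ∈ LinearMap.ker (A.submatrix r id).mulVecLin := by
    show A.submatrix r id *ᵥ (Pi.single u 1 - Pi.single v 1) = 0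
    ext i
    simp [mulVec_sub, huv]
  rw [ker_submatrix_id_eq_of_rank_eq A r h] at hsub
  have hsub : A *ᵥ (Pi.single u 1 - Pi.single v 1) = 0 := hsub
  rwa [mulVec_sub, mulVec_single_one, mulVec_single_one, sub_eq_zero] at hsub

end Matrix

namespace SimpleGraph

variable {V R : Type*} (G : SimpleGraph V) [DecidableRel G.Adj]

theorem adjMatrix_apply_eq_iff [AddMonoidWithOne R] [NeZero (1 : R)] (k u v : V) :
    G.adjMatrix R k u = G.adjMatrix R k v ↔ (G.Adj u k ↔ G.Adj v k) := by
  by_cases hu : G.Adj u k <;> by_cases hv : G.Adj v k <;>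
    simp [adjMatrix_apply, G.adj_comm k, hu, hv]

end SimpleGraph

theorem neighborSet_inter_ne_of_not_adj_general {V : Type*} [Fintype V]
    (G : SimpleGraph V) [DecidableRel G.Adj]
    (hred : ∀ x y : V, G.neighborSet x = G.neighborSet y → x = y)
    (s : Set V) [Fintype s]
    (hrank : ((G.adjMatrix ℚ).submatrix ((↑) : s → V) ((↑) : s → V)).rank
      = (G.adjMatrix ℚ).rank)
    (u v : V) (huv : u ≠ v) :
    G.neighborSet u ∩ s ≠ G.neighborSet v ∩ s := by
  classical
  intro heq
  have hrows := rank_submatrix_id_eq_of_rank_submatrix_eq _ _ _ hrank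
  have hcol : (G.adjMatrix ℚ).col u = (G.adjMatrix ℚ).col v :=
    col_eq_of_rank_submatrix_id_eq _ _ hrows fun i => (G.adjMatrix_apply_eq_iff _ _ _).2 <| by
      simpa using Set.ext_iff.1 heq i
  refine huv (hred u v (Set.ext fun k => ?_))
  exact (G.adjMatrix_apply_eq_iff k u v).1 (congrFun hcol k)

theorem neighborSet_inter_ne_of_not_adj {V : Type*} [Fintype V]
    (G : SimpleGraph V) [DecidableRel G.Adj]
    (hred : ∀ x y : V, G.neighborSet x = G.neighborSet y → x = y)
    (s : Set V) [Fintype s]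
    (hrank : ((G.adjMatrix ℚ).submatrix ((↑) : s → V) ((↑) : s → V)).rank
      = (G.adjMatrix ℚ).rank)
    (u v : V) (hu : u ∉ s) (hv : v ∉ s) (huv : u ≠ v) (hadj : ¬ G.Adj u v) :
    G.neighborSet u ∩ s ≠ G.neighborSet v ∩ s :=
  neighborSet_inter_ne_of_not_adj_general G hred s hrank u v huv
end

section
/- Let A be a symmetric matrix over ℚ of the block form [[0, θ, α],[θ, 0, β],[αᵀ, βᵀ, B]] where θ ∈ {0,1}, B is an invertible symmetric k×k matrix, and rank(A) = rank(B) = k. Let Ã be the matrix obtained from A by replacing θ with 1−θ in both off-diagonal positions. Then rank(Ã) = k + 2. -/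
open scoped Matrix

/-!
Write `D = [α; β]`. By Guttman rank additivity, the rank of a symmetric block matrix with
invertible corner `B` is `k` plus the rank of the Schur complement `C - D B⁻¹ Dᵀ` of `B`.
So `rank A = k` forces `D B⁻¹ Dᵀ = [[0, θ], [θ, 0]]`, and then the Schur complement of `B` in the
flipped matrix is `[[0, 1 - 2θ], [1 - 2θ, 0]]`, which is invertible because `θ ∈ {0, 1}`.
-/

theorem Submodule.finrank_prod {R M N : Type*} [DivisionRing R] [AddCommGroup M] [Module R M]
    [AddCommGroup N] [Module R N] (p : Submodule R M) (q : Submodule R N)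
    [FiniteDimensional R p] [FiniteDimensional R q] :
    Module.finrank R (p.prod q) = Module.finrank R p + Module.finrank R q := by
  have hinj : Function.Injective (p.subtype.prodMap q.subtype) :=
    Prod.map_injective.mpr ⟨p.injective_subtype, q.injective_subtype⟩
  rw [← Module.finrank_prod, ← LinearMap.finrank_range_of_inj hinj, LinearMap.range_prodMap,
    Submodule.range_subtype, Submodule.range_subtype]

namespace Matrix

variable {R : Type*} [Field R] {l m n m' n' : Type*}

theorem rank_eq_zero_iff [Fintype n] {A : Matrix m n R} : A.rank = 0 ↔ A = 0 := by
  classical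
  rw [rank, Submodule.finrank_eq_zero, LinearMap.range_eq_bot, ← toLin'_apply',
    map_eq_zero_iff _ toLin'.injective]

theorem rank_fromBlocks_zero_zero [Fintype m] [Fintype n] [Fintype m'] [Fintype n']
    (A : Matrix m n R) (D : Matrix m' n' R) :
    (fromBlocks A 0 0 D).rank = A.rank + D.rank := by
  classical
  let bn := (Pi.basisFun R n).prod (Pi.basisFun R n')
  let bm := (Pi.basisFun R m).prod (Pi.basisFun R m')
  have hprodMap : toLin bn bm (fromBlocks A 0 0 D) = (toLin' A).prodMap (toLin' D) := by
    refine Module.Basis.ext bn ?_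
    rintro (i | i) <;> rw [toLin_self] <;> ext j <;>
      simp [bn, bm, Fintype.sum_sum_type, Prod.fst_sum, Prod.snd_sum, Finset.sum_apply,
        Pi.single_apply]
  rw [rank_eq_finrank_range_toLin _ bm bn, hprodMap, LinearMap.range_prodMap,
    Submodule.finrank_prod]
  rfl

/-- Guttman rank additivity. -/
theorem rank_fromBlocks_of_invertible₂₂ [Fintype l] [Fintype m] [Fintype n] [DecidableEq l]
    [DecidableEq m] [DecidableEq n] (A : Matrix l m R) (B : Matrix l n R) (C : Matrix n m R)
    (D : Matrix n n R) [Invertible D] :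
    (fromBlocks A B C D).rank = (A - B * ⅟D * C).rank + D.rank := by
  rw [fromBlocks_eq_of_invertible₂₂, rank_mul_eq_left_of_isUnit_det,
    rank_mul_eq_right_of_isUnit_det, rank_fromBlocks_zero_zero] <;> simp

theorem rank_antidiag_fin_two {c : R} (hc : c ≠ 0) : !![0, c; c, 0].rank = 2 := by
  rw [rank_of_isUnit _ ((isUnit_iff_isUnit_det _).mpr (by simp [det_fin_two, hc])),
    Fintype.card_fin]

end Matrix

theorem rank_flip_entry_eq_add_two_general (k : ℕ) (θ : ℚ) (hθ : θ = 0 ∨ θ = 1)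
    (α β : Fin k → ℚ) (B : Matrix (Fin k) (Fin k) ℚ)
    (hBunit : IsUnit B)
    (hBrank : B.rank = k)
    (hArank : (Matrix.fromBlocks !![0, θ; θ, 0] (Matrix.of ![α, β])
        (Matrix.of ![α, β])ᵀ B).rank = k) :
    (Matrix.fromBlocks !![0, 1 - θ; 1 - θ, 0] (Matrix.of ![α, β])
        (Matrix.of ![α, β])ᵀ B).rank = k + 2 := by
  obtain ⟨_⟩ := hBunit.nonempty_invertible
  set D := Matrix.of ![α, β]
  have hschur : D * ⅟B * Dᵀ = !![0, θ; θ, 0] := by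
    rw [Matrix.rank_fromBlocks_of_invertible₂₂, hBrank, Nat.add_eq_right,
      Matrix.rank_eq_zero_iff, sub_eq_zero] at hArank
    exact hArank.symm
  have hflip : !![0, 1 - θ; 1 - θ, 0] - D * ⅟B * Dᵀ = !![0, 1 - 2 * θ; 1 - 2 * θ, 0] := by
    rw [hschur]
    ext i j
    fin_cases i <;> fin_cases j <;>
      simp only [Fin.zero_eta, Fin.mk_one, Fin.isValue, Matrix.sub_apply, Matrix.of_apply,
        Matrix.cons_val', Matrix.cons_val_zero, Matrix.cons_val_one, Matrix.cons_val_fin_one] <;>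
      ring
  have hθ' : 1 - 2 * θ ≠ 0 := by rcases hθ with rfl | rfl <;> norm_num
  rw [Matrix.rank_fromBlocks_of_invertible₂₂, hflip, Matrix.rank_antidiag_fin_two hθ', hBrank,
    add_comm]

theorem rank_flip_entry_eq_add_two (k : ℕ) (θ : ℚ) (hθ : θ = 0 ∨ θ = 1)
    (α β : Fin k → ℚ) (B : Matrix (Fin k) (Fin k) ℚ)
    (hBsymm : B.IsSymm) (hBunit : IsUnit B)
    (hBrank : B.rank = k)
    (hArank : (Matrix.fromBlocks !![0, θ; θ, 0] (Matrix.of ![α, β])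
        (Matrix.of ![α, β])ᵀ B).rank = k) :
    (Matrix.fromBlocks !![0, 1 - θ; 1 - θ, 0] (Matrix.of ![α, β])
        (Matrix.of ![α, β])ᵀ B).rank = k + 2 :=
  rank_flip_entry_eq_add_two_general k θ hθ α β B hBunit hBrank hArank
end
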